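/- arXiv:2006.02408 — 2 statements merged into one kernel-verified Lean document; each statement's English description precedes it below -/
import Mathlib

section
/- Let S and T be strings over an alphabet Σ that have at least one common letter, and let (s_1, …, s_k) be a maximal block decomposition of S with respect to T. Let X be a longest common substring of S and T. Then every occurrence S[p..q] of X in S contains the first letter of some block; that is, there exists i ∈ {1, …, k} such that the starting position of block s_i in S lies in the interval [p, q]. -/
/-!
If an occurrence `S[p..p+|X|)` of a longest common substring contained no block start, it would
lie strictly inside one block, starting after that block's first letter. That block is a
substring of `T`, so `S[p-1..p+|X|)` would be a common substring of length `|X| + 1`.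
-/

/-- A block decomposition of `S` with respect to `T`: a sequence of nonempty
strings whose concatenation is `S`, each being a substring of `T`. -/
def IsBlockDecomp {α : Type*} (T : List α) (bs : List (List α)) (S : List α) : Prop :=
  bs.flatten = S ∧ ∀ b ∈ bs, b ≠ [] ∧ b <:+: T

/-- A maximal block decomposition: additionally, the concatenation of any two
consecutive blocks is not a substring of `T`. -/
def IsMaximalBlockDecomp {α : Type*} (T : List α) (bs : List (List α)) (S : List α) : Prop :=
  IsBlockDecomp T bs S ∧
    ∀ i, i + 1 < bs.length → ¬ (bs.getD i [] ++ bs.getD (i + 1) []) <:+: T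

/-- The (0-indexed) starting position of block `i` inside the decomposed string. -/
def blockStart {α : Type*} (bs : List (List α)) (i : ℕ) : ℕ :=
  ((bs.take i).flatten).length

lemma take_drop_infix {α : Type*} (l : List α) (m n : ℕ) : (l.drop m).take n <:+: l :=
  (List.take_prefix n _).isInfix.trans (List.drop_suffix m l).isInfix

section BlockStart

variable {α : Type*}

@[simp]
lemma blockStart_zero (bs : List (List α)) : blockStart bs 0 = 0 := by
  simp [blockStart]

lemma blockStart_cons_succ (b : List α) (bs : List (List α)) (i : ℕ) :
    blockStart (b :: bs) (i + 1) = b.length + blockStart bs i := by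
  simp [blockStart]

lemma blockStart_succ (bs : List (List α)) {i : ℕ} (hi : i < bs.length) :
    blockStart bs (i + 1) = blockStart bs i + bs[i].length := by
  rw [blockStart, blockStart, List.take_add_one, List.getElem?_eq_getElem hi]
  simp only [Option.toList_some, List.flatten_append, List.length_append, List.flatten_singleton]

lemma blockStart_of_length_le (bs : List (List α)) {i : ℕ} (hi : bs.length ≤ i) :
    blockStart bs i = bs.flatten.length := by
  rw [blockStart, List.take_of_length_le hi]

lemma lt_length_of_blockStart_lt (bs : List (List α)) {i : ℕ}
    (hi : blockStart bs i < bs.flatten.length) : i < bs.length := by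
  by_contra! h
  exact hi.ne (blockStart_of_length_le bs h)

lemma drop_blockStart (bs : List (List α)) (i : ℕ) :
    bs.flatten.drop (blockStart bs i) = (bs.drop i).flatten := by
  have h : bs.flatten = (bs.take i).flatten ++ (bs.drop i).flatten := by
    rw [← List.flatten_append, List.take_append_drop]
  rw [h, blockStart, List.drop_left]

lemma exists_blockStart_le_lt (bs : List (List α)) {p : ℕ} (hp : p < bs.flatten.length) :
    ∃ i < bs.length, blockStart bs i ≤ p ∧ p < blockStart bs (i + 1) := by
  induction bs generalizing p with
  | nil => simp at hp
  | cons b bs ih =>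
    by_cases hb : p < b.length
    · exact ⟨0, by simp, by simp, by simpa [blockStart_cons_succ]⟩
    · obtain ⟨i, hi, hle, hlt⟩ := ih (p := p - b.length)
        (by simp only [List.flatten_cons, List.length_append] at hp; omega)
      refine ⟨i + 1, by simpa, ?_, ?_⟩ <;> simp only [blockStart_cons_succ] <;> omega

lemma take_drop_flatten_infix_getElem (bs : List (List α)) {i a n : ℕ} (hi : i < bs.length)
    (ha : blockStart bs i ≤ a) (hn : a + n ≤ blockStart bs (i + 1)) :
    (bs.flatten.drop a).take n <:+: bs[i] := by
  rw [blockStart_succ bs hi] at hn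
  obtain ⟨off, rfl⟩ := Nat.exists_eq_add_of_le ha
  have hdrop : bs.flatten.drop (blockStart bs i + off) =
      bs[i].drop off ++ (bs.drop (i + 1)).flatten := by
    rw [← List.drop_drop, drop_blockStart, List.drop_eq_getElem_cons hi, List.flatten_cons,
      List.drop_append_of_le_length (by omega)]
  rw [hdrop, List.take_append_of_le_length (by simp; omega)]
  exact take_drop_infix _ _ _

end BlockStart

theorem lcs_contains_block_start_general {α : Type*} (S T : List α) (bs : List (List α))
    (hdec : IsMaximalBlockDecomp T bs S)
    (hcommon : ∃ ch, ch ∈ S ∧ ch ∈ T)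
    (X : List α)
    (hlcs : ∀ Y : List α, Y <:+: S → Y <:+: T → Y.length ≤ X.length)
    (p : ℕ) (hp : p + X.length ≤ S.length) :
    ∃ i < bs.length, p ≤ blockStart bs i ∧ blockStart bs i < p + X.length := by
  obtain ⟨⟨rfl, hblocks⟩, -⟩ := hdec
  have hX : 0 < X.length := by
    obtain ⟨ch, hchS, hchT⟩ := hcommon
    have := hlcs [ch] ((List.singleton_infix_iff _ _).2 hchS)
      ((List.singleton_infix_iff _ _).2 hchT)
    simp only [List.length_singleton] at this
    omega
  by_contra! hnone
  obtain ⟨i, hi, hip, hpi⟩ := exists_blockStart_le_lt bs (p := p) (by omega)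
  have hstart : blockStart bs i < p := hip.lt_of_ne fun h => by have := hnone i hi h.ge; omega
  have hend : p + X.length ≤ blockStart bs (i + 1) := by
    by_contra! h
    have := hnone (i + 1) (lt_length_of_blockStart_lt bs (by omega)) hpi.le
    omega
  -- `S[p-1..p+|X|)` still lies inside block `i`, so it is a longer common substring.
  have hT : (bs.flatten.drop (p - 1)).take (X.length + 1) <:+: T :=
    (take_drop_flatten_infix_getElem bs hi (by omega) (by omega)).trans
      (hblocks _ (List.getElem_mem hi)).2
  have := hlcs _ (take_drop_infix _ _ _) hT
  simp only [List.length_take, List.length_drop] at this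
  omega

/-- If `S` and `T` share a common letter and `X` is a longest common substring of
`S` and `T`, then every occurrence of `X` in `S` (starting at 0-indexed
position `p`) contains the first letter of some block of any maximal block
decomposition of `S` with respect to `T`. -/
theorem lcs_contains_block_start {α : Type*} (S T : List α) (bs : List (List α))
    (hdec : IsMaximalBlockDecomp T bs S)
    (hcommon : ∃ ch, ch ∈ S ∧ ch ∈ T)
    (X : List α) (hXS : X <:+: S) (hXT : X <:+: T)
    (hlcs : ∀ Y : List α, Y <:+: S → Y <:+: T → Y.length ≤ X.length)
    (p : ℕ) (hp : p + X.length ≤ S.length) (hocc : (S.drop p).take X.length = X) :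
    ∃ i < bs.length, p ≤ blockStart bs i ∧ blockStart bs i < p + X.length :=
  lcs_contains_block_start_general S T bs hdec hcommon X hlcs p hp
end

section
/- Let S and T be strings over an alphabet Σ that have at least one common letter, and let (s_1, …, s_k) be a maximal block decomposition of S with respect to T, with the convention that s_j denotes the empty string for j ∉ {1, …, k}. Let X be a longest common substring of S and T. Then every occurrence of X in S is, for some i ∈ {1, …, k}, the concatenation of a (possibly empty) suffix of s_{i−1} s_i and a (possibly empty) prefix of s_{i+1} s_{i+2}, where the suffix ends at the last letter of block s_i and the prefix starts at the first letter of block s_{i+1} in S. -/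
/-- The `j`-th block (1-indexed): `blk bs j = s_j` for `j ∈ {1, …, k}`, and the
empty string for `j ∉ {1, …, k}` (in particular for `j = 0` and `j = k + 1`). -/
def blk {α : Type*} (bs : List (List α)) (j : ℕ) : List α :=
  if j = 0 then [] else bs.getD (j - 1) []

private lemma oneblock {α : Type*} (bs : List (List α)) (i : ℕ) :
    ((bs.drop i).take 1).flatten = bs.getD i [] := by
  have h0 : bs.getD i [] = (bs.drop i).getD 0 [] := by
    simp [List.getD_eq_getElem?_getD, List.getElem?_drop]
  rw [h0]
  rcases bs.drop i with _ | ⟨x, l⟩ <;> simp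

private lemma twoblocks {α : Type*} (bs : List (List α)) (i : ℕ) :
    ((bs.drop i).take 2).flatten = bs.getD i [] ++ bs.getD (i + 1) [] := by
  have h0 : bs.getD i [] = (bs.drop i).getD 0 [] := by
    simp [List.getD_eq_getElem?_getD, List.getElem?_drop]
  have h1 : bs.getD (i + 1) [] = (bs.drop i).getD 1 [] := by
    simp [List.getD_eq_getElem?_getD, List.getElem?_drop]
  rw [h0, h1]
  rcases bs.drop i with _ | ⟨x, _ | ⟨y, l⟩⟩ <;> simp

private lemma seg_infix {α : Type*} (S : List α) {p q m L : ℕ} (hpq : p ≤ q)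
    (h : q + m ≤ p + L) : (S.drop q).take m <:+: (S.drop p).take L := by
  have e1 : p + (q - p) = q := by omega
  have e2 : min m (L - (q - p)) = m := by omega
  have key : (S.drop q).take m = (((S.drop p).take L).drop (q - p)).take m := by
    rw [List.drop_take, List.drop_drop, e1, List.take_take, e2]
  rw [key]
  exact (List.take_prefix _ _).isInfix.trans (List.drop_suffix _ _).isInfix

/-- If `S` and `T` share a common letter and `X` is a longest common substring of
`S` and `T`, then every occurrence of `X` in `S` (starting at 0-indexed position
`p`) is, for some `i ∈ {1, …, k}`, the concatenation of a (possibly empty)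
suffix `U` of `s_{i-1} s_i` and a (possibly empty) prefix `V` of
`s_{i+1} s_{i+2}`, where `U` ends at the last letter of block `s_i` (that is,
the split point `p + |U|` is exactly the position right after block `s_i`). -/
theorem lcs_suffix_prefix_decomposition {α : Type*} (S T : List α) (bs : List (List α))
    (hdec : IsMaximalBlockDecomp T bs S)
    (hcommon : ∃ ch, ch ∈ S ∧ ch ∈ T)
    (X : List α) (hXS : X <:+: S) (hXT : X <:+: T)
    (hlcs : ∀ Y : List α, Y <:+: S → Y <:+: T → Y.length ≤ X.length)
    (p : ℕ) (hp : p + X.length ≤ S.length) (hocc : (S.drop p).take X.length = X) :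
    ∃ i, 1 ≤ i ∧ i ≤ bs.length ∧
      ∃ U V : List α, X = U ++ V ∧
        U <:+ (blk bs (i - 1) ++ blk bs i) ∧
        V <+: (blk bs (i + 1) ++ blk bs (i + 2)) ∧
        p + U.length = ((bs.take i).flatten).length := by
  obtain ⟨⟨hflat, hblocks⟩, hmax⟩ := hdec
  set k := bs.length with hk
  set L := X.length with hL
  set B : ℕ → ℕ := fun i => ((bs.take i).flatten).length with hB
  have hB0 : B 0 = 0 := by simp [hB]
  have hBk : ∀ i, k ≤ i → B i = S.length := by
    intro i hi
    simp only [hB]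
    rw [List.take_of_length_le hi, hflat]
  have hsplit : ∀ {i j : ℕ}, i ≤ j → bs.take j = bs.take i ++ (bs.drop i).take (j - i) := by
    intro i j hij
    rw [← List.take_add]
    congr 1
    omega
  have hBadd : ∀ {i j : ℕ}, i ≤ j →
      B j = B i + (((bs.drop i).take (j - i)).flatten).length := by
    intro i j hij
    simp only [hB]
    rw [hsplit hij, List.flatten_append, List.length_append]
  have hBmono : ∀ {i j : ℕ}, i ≤ j → B i ≤ B j := by
    intro i j hij
    have := hBadd hij
    omega
  have hBle : ∀ i, B i ≤ S.length := by
    intro i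
    rcases le_or_gt k i with h | h
    · exact (hBk i h).le
    · rw [← hBk k le_rfl]; exact hBmono h.le
  have hseg : ∀ {i j : ℕ}, i ≤ j →
      (S.drop (B i)).take (B j - B i) = ((bs.drop i).take (j - i)).flatten := by
    intro i j hij
    have h1 : S = (bs.take i).flatten ++
        (((bs.drop i).take (j - i)).flatten ++ (bs.drop j).flatten) := by
      rw [← List.flatten_append, ← List.flatten_append, ← List.append_assoc, ← hsplit hij,
        List.take_append_drop, hflat]
    have h2 : S.drop (B i) = ((bs.drop i).take (j - i)).flatten ++ (bs.drop j).flatten := by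
      conv_lhs => rw [h1]
      have e : B i = ((bs.take i).flatten).length := by simp [hB]
      rw [e, List.drop_left]
    have hm : B j - B i = (((bs.drop i).take (j - i)).flatten).length := by
      have := hBadd hij
      omega
    rw [h2, hm, List.take_left]
  have hBsucc : ∀ i, i < k → B i < B (i + 1) := by
    intro i hi
    have e : i + 1 - i = 1 := by omega
    have h1 := hBadd (show i ≤ i + 1 by omega)
    rw [e, oneblock] at h1
    have hg : bs.getD i [] = bs[i] := List.getD_eq_getElem bs [] hi
    have hne : bs[i] ≠ [] := (hblocks _ (List.getElem_mem hi)).1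
    have : 0 < (bs.getD i []).length := by
      rw [hg]
      exact List.length_pos_iff.mpr hne
    omega
  -- L ≥ 1
  obtain ⟨ch, hchS, hchT⟩ := hcommon
  have hsing : ∀ {l : List α}, ch ∈ l → [ch] <:+: l := by
    intro l h
    obtain ⟨s, t, rfl⟩ := List.append_of_mem h
    exact ⟨s, t, by simp⟩
  have hL1 : 1 ≤ L := by simpa using hlcs [ch] (hsing hchS) (hsing hchT)
  have hSlen : 1 ≤ S.length := by omega
  -- the block containing p
  have hex : ∃ i, p < B i := ⟨k, by rw [hBk k le_rfl]; omega⟩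
  set a := Nat.find hex with ha
  have hpa : p < B a := Nat.find_spec hex
  have ha1 : 1 ≤ a := by
    rcases Nat.eq_zero_or_pos a with h | h
    · rw [h, hB0] at hpa; omega
    · exact h
  have hak : a ≤ k := Nat.find_min' hex (by rw [hBk k le_rfl]; omega)
  have hpa' : B (a - 1) ≤ p := by
    have := Nat.find_min hex (show a - 1 < a by omega)
    omega
  -- the boundary covering the end of the occurrence
  have hexb : ∃ i, p + L ≤ B i := ⟨k, by rw [hBk k le_rfl]; exact hp⟩
  set b := Nat.find hexb with hb'
  have hbspec : p + L ≤ B b := Nat.find_spec hexb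
  have hbk : b ≤ k := Nat.find_min' hexb (by rw [hBk k le_rfl]; exact hp)
  have hXeq : X = (S.drop p).take L := hocc.symm
  rcases lt_or_ge (p + L) (B a) with hcase | hcase
  · -- occurrence strictly inside block a : extend it, contradiction with LCS
    exfalso
    have hak' : a - 1 < k := by omega
    have e1 : a - 1 + 1 = a := by omega
    have e2 : a - (a - 1) = 1 := by omega
    have hsa : (S.drop (B (a - 1))).take (B a - B (a - 1)) = bs.getD (a - 1) [] := by
      rw [hseg (show a - 1 ≤ a by omega), e2, oneblock]
    have hBa1a : B (a - 1) ≤ B a := hBmono (by omega)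
    have hY : (S.drop p).take (L + 1) <:+: bs.getD (a - 1) [] := by
      rw [← hsa]
      exact seg_infix S hpa' (by omega)
    have hgT : bs.getD (a - 1) [] <:+: T := by
      rw [List.getD_eq_getElem bs [] hak']
      exact (hblocks _ (List.getElem_mem hak')).2
    have hYS : (S.drop p).take (L + 1) <:+: S :=
      (List.take_prefix _ _).isInfix.trans (List.drop_suffix _ _).isInfix
    have hlen : ((S.drop p).take (L + 1)).length = L + 1 := by
      rw [List.length_take, List.length_drop]
      have := hBle a
      omega
    have := hlcs _ hYS (hY.trans hgT)
    rw [hlen] at this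
    omega
  · rcases lt_or_ge (a + 2) b with hcase2 | hcase2
    · -- two full consecutive blocks inside X : contradiction with maximality
      exfalso
      have hk2 : a + 1 < k := by omega
      have e2 : a + 2 - a = 2 := by omega
      have hW : (S.drop (B a)).take (B (a + 2) - B a) =
          bs.getD a [] ++ bs.getD (a + 1) [] := by
        rw [hseg (show a ≤ a + 2 by omega), e2, twoblocks]
      have hBab : B (a + 2) ≤ B (b - 1) := hBmono (by omega)
      have hbmin : ¬ p + L ≤ B (b - 1) := Nat.find_min hexb (show b - 1 < b by omega)
      have hWX : (S.drop (B a)).take (B (a + 2) - B a) <:+: X := by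
        rw [hXeq]
        exact seg_infix S hpa.le (by have := hBmono (show a ≤ a + 2 by omega); omega)
      rw [hW] at hWX
      exact hmax a hk2 (hWX.trans hXT)
    · -- the good case: split X at the boundary B a
      have hbd : p + L ≤ B (min (a + 2) k) := by
        have : b ≤ min (a + 2) k := by omega
        exact le_trans hbspec (hBmono this)
      set d := min (a + 2) k with hd
      refine ⟨a, ha1, hak, X.take (B a - p), X.drop (B a - p), (List.take_append_drop _ _).symm,
        ?_, ?_, ?_⟩
      · -- suffix condition
        set c := a - 2 with hc
        have hU : X.take (B a - p) = (S.take (B a)).drop p := by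
          rw [hXeq, List.take_take, List.drop_take]
          congr 1
          omega
        have hRHS : blk bs (a - 1) ++ blk bs a = (S.take (B a)).drop (B c) := by
          rw [List.drop_take]
          rcases eq_or_lt_of_le ha1 with h1 | h1
          · have hc0 : c = 0 := by omega
            have : a - c = 1 := by omega
            rw [hseg (show c ≤ a by omega), this, oneblock]
            simp [blk, ← h1, hc0]
          · have : a - c = 2 := by omega
            rw [hseg (show c ≤ a by omega), this, twoblocks]
            have g1 : blk bs (a - 1) = bs.getD c [] := by
              simp only [blk, if_neg (show a - 1 ≠ 0 by omega)]
              congr 1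
              try omega
            have g2 : blk bs a = bs.getD (c + 1) [] := by
              simp only [blk, if_neg (show a ≠ 0 by omega)]
              congr 1
              try omega
            rw [g1, g2]
        rw [hU, hRHS]
        have hlen1 : ((S.take (B a)).drop p).length = B a - p := by
          rw [List.length_drop, List.length_take]
          have := hBle a
          omega
        have hlen2 : ((S.take (B a)).drop (B c)).length = B a - B c := by
          rw [List.length_drop, List.length_take]
          have := hBle a
          omega
        have hcp : B c ≤ p := le_trans (hBmono (show c ≤ a - 1 by omega)) hpa'
        exact List.suffix_of_suffix_length_le (List.drop_suffix _ _) (List.drop_suffix _ _)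
          (by omega)
      · -- prefix condition
        have hV : X.drop (B a - p) = (S.drop (B a)).take (L - (B a - p)) := by
          rw [hXeq, List.drop_take, List.drop_drop]
          congr 2
          omega
        have hRHS : blk bs (a + 1) ++ blk bs (a + 2) = (S.drop (B a)).take (B d - B a) := by
          have hblk : blk bs (a + 1) ++ blk bs (a + 2) = bs.getD a [] ++ bs.getD (a + 1) [] := by
            simp [blk]
          rw [hblk, ← twoblocks, hseg (show a ≤ d by omega)]
          congr 1
          rcases le_or_gt (a + 2) k with h | h
          · have : d - a = 2 := by omega
            rw [this]
          · have hdk : d = k := by omega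
            have hlen : (bs.drop a).length = k - a := by simp [hk]
            rw [List.take_of_length_le (by omega), List.take_of_length_le (by omega)]
        rw [hV, hRHS]
        have hlen1 : ((S.drop (B a)).take (L - (B a - p))).length = L - (B a - p) := by
          rw [List.length_take, List.length_drop]
          have h1 := hBle d
          have h2 := hBmono (show a ≤ d by omega)
          omega
        have hlen2 : ((S.drop (B a)).take (B d - B a)).length = B d - B a := by
          rw [List.length_take, List.length_drop]
          have h1 := hBle d
          have h2 := hBmono (show a ≤ d by omega)
          omega
        exact List.prefix_of_prefix_length_le (List.take_prefix _ _) (List.take_prefix _ _)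
          (by omega)
      · -- split point
        have hlenU : (X.take (B a - p)).length = B a - p := by
          rw [List.length_take]
          omega
        have e : B a = ((bs.take a).flatten).length := by simp [hB]
        rw [hlenU, ← e]
        omega
end
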